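/- arXiv:2512.12093 — 3 statements merged into one kernel-verified Lean document; each statement's English description precedes it below -/
import Mathlib

section
/- Let q ∈ ℂ, k' ∈ ℤ, b ∈ ℂ with b ≠ 0 and b ≠ 1, and suppose q ≠ -k' (in ℂ). Then the exponential profile g : ℤ → ℂ, g(i) = b^i, does not satisfy the nonlinear functional equation (i - j)·g(i)·g(j) = g(i+j+k')·[(i+k'+q)·g(i) - (j+k'+q)·g(j)] for all i,j ∈ ℤ. -/
/-- The nonlinear functional equation for a profile `g : ℤ → ℂ`. -/
def NLeq (q : ℂ) (k' : ℤ) (g : ℤ → ℂ) : Prop :=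
  ∀ i j : ℤ,
    ((i : ℂ) - (j : ℂ)) * g i * g j =
      g (i + j + k') * (((i : ℂ) + (k' : ℂ) + q) * g i - ((j : ℂ) + (k' : ℂ) + q) * g j)

theorem exponential_profile_not_admissible (q : ℂ) (k' : ℤ) (b : ℂ)
    (hb0 : b ≠ 0) (hb1 : b ≠ 1) (hq : q ≠ -(k' : ℂ)) :
    ¬ NLeq q k' (fun i => b ^ i) := by
  intro h
  have hA : b ^ (k' : ℤ) ≠ 0 := zpow_ne_zero _ hb0
  have hd : b - 1 ≠ 0 := sub_ne_zero.mpr hb1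
  have h1 := h 1 0
  have h2 := h 2 1
  have h3 := h 3 2
  simp only [zpow_add₀ hb0, zpow_one, zpow_zero, zpow_ofNat] at h1 h2 h3
  push_cast at h1 h2 h3
  have e1 : b ^ (3:ℕ) * (b ^ (k' : ℤ) * ((b - 1) * ((2 + (k':ℂ) + q) * b - ((k':ℂ) + q)))) = 0 := by
    linear_combination b ^ (2:ℕ) * h1 - h2
  have e2 : b ^ (6:ℕ) * (b ^ (k' : ℤ) * ((b - 1) * ((3 + (k':ℂ) + q) * b - (1 + (k':ℂ) + q)))) = 0 := by
    linear_combination b ^ (2:ℕ) * h2 - h3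
  have G1 : (2 + (k':ℂ) + q) * b - ((k':ℂ) + q) = 0 := by
    simpa [zpow_ne_zero, hb0, hA, hd, mul_eq_zero, sub_eq_zero, hb1] using e1
  have G2 : (3 + (k':ℂ) + q) * b - (1 + (k':ℂ) + q) = 0 := by
    simpa [zpow_ne_zero, hb0, hA, hd, mul_eq_zero, sub_eq_zero, hb1] using e2
  exact hb1 (by linear_combination G2 - G1)
end

section
/- Let q ∈ ℂ, k' ∈ ℤ, and suppose g : ℤ → ℂ is a periodic function of period p ≥ 1 (g(i+p) = g(i) for all i) that is nowhere zero and satisfies the nonlinear functional equation (i - j)·g(i)·g(j) = g(i+j+k')·[(i+k'+q)·g(i) - (j+k'+q)·g(j)] for all i,j ∈ ℤ. Then g is constant. -/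
theorem periodic_nowhere_zero_is_constant (q : ℂ) (k' : ℤ) (g : ℤ → ℂ) (p : ℤ)
    (hp : 1 ≤ p) (hper : ∀ i : ℤ, g (i + p) = g i) (hnz : ∀ i : ℤ, g i ≠ 0)
    (hg : NLeq q k' g) :
    ∀ i j : ℤ, g i = g j := by
  have key : ∀ i j : ℤ, g (i + j + k') = g j := by
    intro i j
    have h1 := hg i j
    have h2 := hg (i + p) j
    have e1 : g (i + p) = g i := hper i
    have e2 : g (i + p + j + k') = g (i + j + k') := by
      rw [show i + p + j + k' = (i + j + k') + p by ring, hper]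
    rw [e1, e2] at h2
    push_cast at h2
    have hpc : (p : ℂ) ≠ 0 := by
      simp only [ne_eq, Int.cast_eq_zero]; omega
    have hmain : (p : ℂ) * g i * g j = (p : ℂ) * g i * g (i + j + k') := by
      linear_combination h2 - h1
    exact (mul_left_cancel₀ (mul_ne_zero hpc (hnz i)) hmain).symm
  intro a b
  have h := key (a - b - k') b
  rw [show a - b - k' + b + k' = a by ring] at h
  exact h
end

section
/- Let q ∈ ℂ, (k,k') ∈ ℤ² with q ≠ k' and k ≠ 0 (with q ≠ k' meaning q is not the image of the integer k' in ℂ), and suppose q + k' ∉ ℤ. Suppose g : ℤ → ℂ is nowhere zero and satisfies the nonlinear functional equation (i - j)·g(i)·g(j) = g(i+j+k')·[(i+k'+q)·g(i) - (j+k'+q)·g(j)] for all i,j ∈ ℤ. Then g is constant. -/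
/-- Auxiliary rigidity lemma for the linearized equation satisfied by `f = g⁻¹`. -/
theorem linearized_constant (c : ℂ) (k' : ℤ) (h0 : ∀ n : ℤ, (n : ℂ) + c ≠ 0) (f : ℤ → ℂ)
    (hE : ∀ i j : ℤ, ((i : ℂ) - (j : ℂ)) * f (i + j + k') =
      ((i : ℂ) + c) * f j - ((j : ℂ) + c) * f i) :
    ∀ i j : ℤ, f i = f j := by
  have e1 : ∀ m : ℤ, f (2*m+1+k') = ((m:ℂ)+1+c) * f m - ((m:ℂ)+c) * f (m+1) := by
    intro m
    have h := hE (m+1) m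
    rw [show m+1+m+k' = 2*m+1+k' from by ring] at h
    push_cast at h
    linear_combination h
  have e2 : ∀ m : ℤ, 2 * f (2*m+2+k') = ((m:ℂ)+2+c) * f m - ((m:ℂ)+c) * f (m+2) := by
    intro m
    have h := hE (m+2) m
    rw [show m+2+m+k' = 2*m+2+k' from by ring] at h
    push_cast at h
    linear_combination h
  have e3 : ∀ m : ℤ, f (2*m+3+k') = ((m:ℂ)+2+c) * f (m+1) - ((m:ℂ)+1+c) * f (m+2) := by
    intro m
    have h := hE (m+2) (m+1)
    rw [show m+2+(m+1)+k' = 2*m+3+k' from by ring] at h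
    push_cast at h
    linear_combination h
  have e4 : ∀ m : ℤ, 3 * f (2*m+3+k') = ((m:ℂ)+3+c) * f m - ((m:ℂ)+c) * f (m+3) := by
    intro m
    have h := hE (m+3) m
    rw [show m+3+m+k' = 2*m+3+k' from by ring] at h
    push_cast at h
    linear_combination h
  -- the second difference satisfies a first-order recurrence
  have hstar : ∀ m : ℤ, ((m:ℂ)+c) * (f (m+1) - 2*f (m+2) + f (m+3)) =
      ((m:ℂ)+3+c) * (f m - 2*f (m+1) + f (m+2)) := by
    intro m
    linear_combination e4 m - 3 * e3 m
  -- the reflection relation for second differences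
  have hflip : ∀ m : ℤ, f (2*m+1+k') - 2*f (2*m+1+k'+1) + f (2*m+1+k'+2) =
      -(f m - 2*f (m+1) + f (m+2)) := by
    intro m
    have a := e1 m
    have b := e2 m
    have c3 := e3 m
    rw [show 2*m+2+k' = 2*m+1+k'+1 from by ring] at b
    rw [show 2*m+3+k' = 2*m+1+k'+2 from by ring] at c3
    linear_combination a - b + c3
  -- closed form for the second difference
  have hcf : ∀ m : ℤ, (f m - 2*f (m+1) + f (m+2)) * (c*(1+c)*(2+c)) =
      (f 0 - 2*f 1 + f 2) * (((m:ℂ)+c)*((m:ℂ)+1+c)*((m:ℂ)+2+c)) := by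
    intro m
    induction m using Int.induction_on with
    | zero =>
        norm_num
    | succ i ih =>
        rw [show (i:ℤ)+1+1 = (i:ℤ)+2 from by ring, show (i:ℤ)+1+2 = (i:ℤ)+3 from by ring]
        apply mul_left_cancel₀ (h0 (i:ℤ))
        have hs := hstar (i:ℤ)
        push_cast at hs ih ⊢
        linear_combination (c*(1+c)*(2+c)) * hs + ((i:ℂ)+3+c) * ih
    | pred i ih =>
        rw [show -(i:ℤ)-1+1 = -(i:ℤ) from by ring, show -(i:ℤ)-1+2 = -(i:ℤ)+1 from by ring]
        apply mul_left_cancel₀ (h0 (2-(i:ℤ)))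
        have hs := hstar (-(i:ℤ)-1)
        rw [show -(i:ℤ)-1+1 = -(i:ℤ) from by ring, show -(i:ℤ)-1+2 = -(i:ℤ)+1 from by ring,
          show -(i:ℤ)-1+3 = -(i:ℤ)+2 from by ring] at hs
        push_cast at hs ih ⊢
        linear_combination (-(c*(1+c)*(2+c))) * hs + ((-(i:ℂ))-1+c) * ih
  -- the key constraint family
  have p : ∀ m : ℤ, (f 0 - 2*f 1 + f 2) *
      ((2*(m:ℂ)+1+(k':ℂ)+c)*(2*(m:ℂ)+2+(k':ℂ)+c)*(2*(m:ℂ)+3+(k':ℂ)+c) +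
        ((m:ℂ)+c)*((m:ℂ)+1+c)*((m:ℂ)+2+c)) = 0 := by
    intro m
    have hc := hcf (2*m+1+k')
    have hf := hflip m
    have hm := hcf m
    push_cast at hc hf hm
    linear_combination (c*(1+c)*(2+c)) * hf - hc - hm
  have hγ0 : f 0 - 2*f 1 + f 2 = 0 := by
    have p0 := p 0
    have p1 := p 1
    have p2 := p 2
    have p3 := p 3
    push_cast at p0 p1 p2 p3
    linear_combination (p3 - 3*p2 + 3*p1 - p0) / 54
  have hD : c*(1+c)*(2+c) ≠ 0 := by
    have a0 := h0 0
    have a1 := h0 1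
    have a2 := h0 2
    push_cast at a0 a1 a2
    apply mul_ne_zero (mul_ne_zero _ _) <;>
      first
        | (intro h; apply a0; linear_combination h)
        | (intro h; apply a1; linear_combination h)
        | (intro h; apply a2; linear_combination h)
  have hG0 : ∀ m : ℤ, f m - 2*f (m+1) + f (m+2) = 0 := by
    intro m
    have h2 : (f m - 2*f (m+1) + f (m+2)) * (c*(1+c)*(2+c)) = 0 := by
      rw [hcf m, hγ0]; ring
    rcases mul_eq_zero.mp h2 with h | h
    · exact h
    · exact absurd h hD
  have hstep2 : ∀ m : ℤ, f (2*m+1+k'+1) = f (2*m+1+k') := by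
    intro m
    have a := e1 m
    have b := e2 m
    rw [show 2*m+2+k' = 2*m+1+k'+1 from by ring] at b
    linear_combination b/2 - a - (((m:ℂ)+c)/2) * hG0 m
  have hβ : ∀ n : ℤ, f (n+1) - f n = f 1 - f 0 := by
    intro n
    induction n using Int.induction_on with
    | zero => norm_num
    | succ i ih =>
        have h := hG0 (i:ℤ)
        rw [show (i:ℤ)+2 = (i:ℤ)+1+1 from by ring] at h
        linear_combination ih + h
    | pred i ih =>
        have h := hG0 (-(i:ℤ)-1)
        rw [show -(i:ℤ)-1+2 = -(i:ℤ)+1 from by ring, show -(i:ℤ)-1+1 = -(i:ℤ) from by ring] at h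
        rw [show -(i:ℤ)-1+1 = -(i:ℤ) from by ring]
        linear_combination ih - h
  have hβ0 : f 1 - f 0 = 0 := by
    have h := hstep2 0
    rw [show 2*(0:ℤ)+1+k' = k'+1 from by ring] at h
    have h2 := hβ (k'+1)
    linear_combination h - h2
  have hconst : ∀ n : ℤ, f n = f 0 := by
    intro n
    induction n using Int.induction_on with
    | zero => rfl
    | succ i ih => linear_combination ih + hβ (i:ℤ) + hβ0
    | pred i ih =>
        have h := hβ (-(i:ℤ)-1)
        rw [show -(i:ℤ)-1+1 = -(i:ℤ) from by ring] at h
        linear_combination ih - h - hβ0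
  intro i j
  rw [hconst i, hconst j]

theorem nowhere_zero_solution_constant (q : ℂ) (k k' : ℤ) (hq : q ≠ (k' : ℂ)) (hk : k ≠ 0)
    (g : ℤ → ℂ) (hnz : ∀ i : ℤ, g i ≠ 0) (hg : NLeq q k' g)
    (hgen : ¬ ∃ n : ℤ, q + (k' : ℂ) = (n : ℂ)) :
    ∀ i j : ℤ, g i = g j := by
  set c : ℂ := (k' : ℂ) + q with hc
  have h0 : ∀ n : ℤ, (n : ℂ) + c ≠ 0 := by
    intro n hn
    apply hgen
    exact ⟨-n, by push_cast; linear_combination hn⟩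
  have hE : ∀ i j : ℤ, ((i : ℂ) - (j : ℂ)) * (fun n => (g n)⁻¹) (i + j + k') =
      ((i : ℂ) + c) * (fun n => (g n)⁻¹) j - ((j : ℂ) + c) * (fun n => (g n)⁻¹) i := by
    intro i j
    simp only
    have h := hg i j
    have hi := hnz i
    have hj := hnz j
    have hij := hnz (i + j + k')
    field_simp
    linear_combination h
  have := linearized_constant c k' h0 (fun n => (g n)⁻¹) hE
  intro i j
  have hf : (g i)⁻¹ = (g j)⁻¹ := this i j
  exact inv_injective hf
end
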